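/- The encoding ⟦·⟧ of X-terms into *x-terms preserves the set of free names: for every X-term P, N(P) = N(⟦P⟧). -/

import Mathlib

namespace StarX

/-- Simple types `A, B ::= T | A → B`. -/
inductive Ty : Type
  | base : Ty
  | arrow : Ty → Ty → Ty
  deriving DecidableEq

/-- Terms of the *x-calculus (including the two active cuts), built from
innames and outnames (both modelled as natural numbers). -/
inductive Term : Type
  | caps : ℕ → ℕ → Term                      -- ⟨x·α⟩
  | exp  : ℕ → Term → ℕ → ℕ → Term           -- x̂ P β̂ · α
  | imp  : Term → ℕ → ℕ → ℕ → Term → Term    -- P α̂ [x] ŷ Q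
  | cut  : Term → ℕ → ℕ → Term → Term        -- P α̂ † x̂ Q
  | lcut : Term → ℕ → ℕ → Term → Term        -- left-active cut
  | rcut : Term → ℕ → ℕ → Term → Term        -- right-active cut
  | wl   : ℕ → Term → Term                   -- x ⊙ P   (left eraser)
  | wr   : Term → ℕ → Term                   -- P ⊙ α   (right eraser)
  | cl   : ℕ → ℕ → ℕ → Term → Term           -- x < (x̂₁, x̂₂) P  (left duplicator)
  | cr   : Term → ℕ → ℕ → ℕ → Term           -- P (α̂₁, α̂₂) > α  (right duplicator)
  deriving DecidableEq

namespace Term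

/-- Free innames `I(P)`. -/
def fin : Term → Finset ℕ
  | caps x _ => {x}
  | exp x P _ _ => P.fin.erase x
  | imp P _ x y Q => insert x (P.fin ∪ Q.fin.erase y)
  | cut P _ x Q => P.fin ∪ Q.fin.erase x
  | lcut P _ x Q => P.fin ∪ Q.fin.erase x
  | rcut P _ x Q => P.fin ∪ Q.fin.erase x
  | wl x P => insert x P.fin
  | wr P _ => P.fin
  | cl x x1 x2 P => insert x ((P.fin.erase x1).erase x2)
  | cr P _ _ _ => P.fin

/-- Free outnames `O(P)`. -/
def fout : Term → Finset ℕ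
  | caps _ a => {a}
  | exp _ P b a => insert a (P.fout.erase b)
  | imp P a _ _ Q => P.fout.erase a ∪ Q.fout
  | cut P a _ Q => P.fout.erase a ∪ Q.fout
  | lcut P a _ Q => P.fout.erase a ∪ Q.fout
  | rcut P a _ Q => P.fout.erase a ∪ Q.fout
  | wl _ P => P.fout
  | wr P a => insert a P.fout
  | cl _ _ _ P => P.fout
  | cr P a1 a2 a => insert a ((P.fout.erase a1).erase a2)

/-- A strict bound for the names occurring in a term (used to pick fresh names). -/
def maxName : Term → ℕ
  | caps x a => max x a
  | exp x P b a => max (max x (max b a)) P.maxName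
  | imp P a x y Q => max (max a (max x y)) (max P.maxName Q.maxName)
  | cut P a x Q => max (max a x) (max P.maxName Q.maxName)
  | lcut P a x Q => max (max a x) (max P.maxName Q.maxName)
  | rcut P a x Q => max (max a x) (max P.maxName Q.maxName)
  | wl x P => max x P.maxName
  | wr P a => max a P.maxName
  | cl x x1 x2 P => max (max x (max x1 x2)) P.maxName
  | cr P a1 a2 a => max (max a (max a1 a2)) P.maxName

/-- Renaming `P{n/o}` of the (unique) free inname `o` by the fresh inname `n`. -/
def renameIn (n o : ℕ) : Term → Term
  | caps x a => caps (if x = o then n else x) a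
  | exp x P b a => if x = o then exp x P b a else exp x (P.renameIn n o) b a
  | imp P a x y Q =>
      imp (P.renameIn n o) a (if x = o then n else x) y
        (if y = o then Q else Q.renameIn n o)
  | cut P a x Q => cut (P.renameIn n o) a x (if x = o then Q else Q.renameIn n o)
  | lcut P a x Q => lcut (P.renameIn n o) a x (if x = o then Q else Q.renameIn n o)
  | rcut P a x Q => rcut (P.renameIn n o) a x (if x = o then Q else Q.renameIn n o)
  | wl x P => wl (if x = o then n else x) (P.renameIn n o)
  | wr P a => wr (P.renameIn n o) a
  | cl x x1 x2 P =>
      cl (if x = o then n else x) x1 x2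
        (if x1 = o ∨ x2 = o then P else P.renameIn n o)
  | cr P a1 a2 a => cr (P.renameIn n o) a1 a2 a

/-- Renaming `P{n/o}` of the (unique) free outname `o` by the fresh outname `n`. -/
def renameOut (n o : ℕ) : Term → Term
  | caps x a => caps x (if a = o then n else a)
  | exp x P b a =>
      exp x (if b = o then P else P.renameOut n o) b (if a = o then n else a)
  | imp P a x y Q =>
      imp (if a = o then P else P.renameOut n o) a x y (Q.renameOut n o)
  | cut P a x Q => cut (if a = o then P else P.renameOut n o) a x (Q.renameOut n o)
  | lcut P a x Q => lcut (if a = o then P else P.renameOut n o) a x (Q.renameOut n o)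
  | rcut P a x Q => rcut (if a = o then P else P.renameOut n o) a x (Q.renameOut n o)
  | wl x P => wl x (P.renameOut n o)
  | wr P a => wr (P.renameOut n o) (if a = o then n else a)
  | cl x x1 x2 P => cl x x1 x2 (P.renameOut n o)
  | cr P a1 a2 a =>
      cr (if a1 = o ∨ a2 = o then P else P.renameOut n o) a1 a2
        (if a = o then n else a)

/-- Shift every name (free and bound) of a term by `k`. -/
def shift (k : ℕ) : Term → Term
  | caps x a => caps (x + k) (a + k)
  | exp x P b a => exp (x + k) (P.shift k) (b + k) (a + k)
  | imp P a x y Q => imp (P.shift k) (a + k) (x + k) (y + k) (Q.shift k)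
  | cut P a x Q => cut (P.shift k) (a + k) (x + k) (Q.shift k)
  | lcut P a x Q => lcut (P.shift k) (a + k) (x + k) (Q.shift k)
  | rcut P a x Q => rcut (P.shift k) (a + k) (x + k) (Q.shift k)
  | wl x P => wl (x + k) (P.shift k)
  | wr P a => wr (P.shift k) (a + k)
  | cl x x1 x2 P => cl (x + k) (x1 + k) (x2 + k) (P.shift k)
  | cr P a1 a2 a => cr (P.shift k) (a1 + k) (a2 + k) (a + k)

/-- Linearity: every name has at most one free occurrence and every binder binds
exactly one actual occurrence of a name (introduced names of erasers and
duplicators are fresh).  `*x`-terms are precisely the linear terms. -/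
inductive Linear : Term → Prop
  | caps (x a : ℕ) : Linear (caps x a)
  | exp {P : Term} {x b a : ℕ} : Linear P → x ∈ P.fin → b ∈ P.fout →
      a ∉ P.fout.erase b → Linear (exp x P b a)
  | imp {P Q : Term} {a x y : ℕ} : Linear P → Linear Q → a ∈ P.fout → y ∈ Q.fin →
      x ∉ P.fin ∪ Q.fin.erase y → Disjoint P.fin (Q.fin.erase y) →
      Disjoint (P.fout.erase a) Q.fout → Linear (imp P a x y Q)
  | cut {P Q : Term} {a x : ℕ} : Linear P → Linear Q → a ∈ P.fout → x ∈ Q.fin →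
      Disjoint P.fin (Q.fin.erase x) → Disjoint (P.fout.erase a) Q.fout →
      Linear (cut P a x Q)
  | lcut {P Q : Term} {a x : ℕ} : Linear P → Linear Q → a ∈ P.fout → x ∈ Q.fin →
      Disjoint P.fin (Q.fin.erase x) → Disjoint (P.fout.erase a) Q.fout →
      Linear (lcut P a x Q)
  | rcut {P Q : Term} {a x : ℕ} : Linear P → Linear Q → a ∈ P.fout → x ∈ Q.fin →
      Disjoint P.fin (Q.fin.erase x) → Disjoint (P.fout.erase a) Q.fout →
      Linear (rcut P a x Q)
  | wl {P : Term} {x : ℕ} : Linear P → x ∉ P.fin → Linear (wl x P)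
  | wr {P : Term} {a : ℕ} : Linear P → a ∉ P.fout → Linear (wr P a)
  | cl {P : Term} {x x1 x2 : ℕ} : Linear P → x1 ∈ P.fin → x2 ∈ P.fin → x1 ≠ x2 →
      x ∉ (P.fin.erase x1).erase x2 → Linear (cl x x1 x2 P)
  | cr {P : Term} {a1 a2 a : ℕ} : Linear P → a1 ∈ P.fout → a2 ∈ P.fout → a1 ≠ a2 →
      a ∉ (P.fout.erase a1).erase a2 → Linear (cr P a1 a2 a)

end Term

/-- Contexts: terms with one hole (closed under composition, which is subsumed
by the inductive nesting). -/
inductive Ctx : Type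
  | hole : Ctx
  | exp  : ℕ → Ctx → ℕ → ℕ → Ctx
  | impL : Ctx → ℕ → ℕ → ℕ → Term → Ctx
  | impR : Term → ℕ → ℕ → ℕ → Ctx → Ctx
  | cutL : Ctx → ℕ → ℕ → Term → Ctx
  | cutR : Term → ℕ → ℕ → Ctx → Ctx
  | wl   : ℕ → Ctx → Ctx
  | wr   : Ctx → ℕ → Ctx
  | cl   : ℕ → ℕ → ℕ → Ctx → Ctx
  | cr   : Ctx → ℕ → ℕ → ℕ → Ctx

/-- Placing a term in the hole of a context: `C{P}`. -/
def Ctx.fill : Ctx → Term → Term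
  | .hole, P => P
  | .exp x C b a, P => .exp x (C.fill P) b a
  | .impL C a x y Q, P => .imp (C.fill P) a x y Q
  | .impR Q a x y C, P => .imp Q a x y (C.fill P)
  | .cutL C a x Q, P => .cut (C.fill P) a x Q
  | .cutR Q a x C, P => .cut Q a x (C.fill P)
  | .wl x C, P => .wl x (C.fill P)
  | .wr C a, P => .wr (C.fill P) a
  | .cl x x1 x2 C, P => .cl x x1 x2 (C.fill P)
  | .cr C a1 a2 a, P => .cr (C.fill P) a1 a2 a

/-- The subterm relation: `Q ⪯ P` iff `P = C{Q}` for some context `C`. -/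
def Subterm (Q P : Term) : Prop := ∃ C : Ctx, C.fill Q = P

/-- Principal innames (L-principal or S-principal). -/
inductive PrincipalIn : Term → ℕ → Prop
  | caps (x a : ℕ) : PrincipalIn (.caps x a) x
  | imp (P : Term) (a x y : ℕ) (Q : Term) : PrincipalIn (.imp P a x y Q) x
  | wl (x : ℕ) (P : Term) : PrincipalIn (.wl x P) x
  | cl (x x1 x2 : ℕ) (P : Term) : PrincipalIn (.cl x x1 x2 P) x

/-- Principal outnames (L-principal or S-principal). -/
inductive PrincipalOut : Term → ℕ → Prop
  | caps (x a : ℕ) : PrincipalOut (.caps x a) a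
  | exp (x : ℕ) (P : Term) (b a : ℕ) : PrincipalOut (.exp x P b a) a
  | wr (P : Term) (a : ℕ) : PrincipalOut (.wr P a) a
  | cr (P : Term) (a1 a2 a : ℕ) : PrincipalOut (.cr P a1 a2 a) a

/-- L-principal innames (introduced by a logical term). -/
inductive LPrincipalIn : Term → ℕ → Prop
  | caps (x a : ℕ) : LPrincipalIn (.caps x a) x
  | imp (P : Term) (a x y : ℕ) (Q : Term) : LPrincipalIn (.imp P a x y Q) x

/-- L-principal outnames (introduced by a logical term). -/
inductive LPrincipalOut : Term → ℕ → Prop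
  | caps (x a : ℕ) : LPrincipalOut (.caps x a) a
  | exp (x : ℕ) (P : Term) (b a : ℕ) : LPrincipalOut (.exp x P b a) a

namespace Term

/-- `W(P)`: prefix `P` with left erasers for the innames in `I` and right
erasers for the outnames in `O`. -/
def wChain (I O : Finset ℕ) (P : Term) : Term :=
  (O.sort (· ≤ ·)).foldr (fun a t => wr t a)
    ((I.sort (· ≤ ·)).foldr (fun x t => wl x t) P)

/-- Chain of left duplicators `z < (ẑ₊ₖ, ẑ₊₂ₖ)` for every `z ∈ S`. -/
def clChain (k : ℕ) (S : Finset ℕ) (P : Term) : Term :=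
  (S.sort (· ≤ ·)).foldr (fun z t => cl z (z + k) (z + 2 * k) t) P

/-- Chain of right duplicators `(â₊ₖ, â₊₂ₖ) > a` for every `a ∈ S`. -/
def crChain (k : ℕ) (S : Finset ℕ) (P : Term) : Term :=
  (S.sort (· ≤ ·)).foldr (fun a t => cr t (a + k) (a + 2 * k) a) P

/-- Rename every inname in `S` to its `+k` copy. -/
def renameSetIn (S : Finset ℕ) (k : ℕ) (P : Term) : Term :=
  (S.sort (· ≤ ·)).foldr (fun z t => t.renameIn (z + k) z) P

/-- Rename every outname in `S` to its `+k` copy. -/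
def renameSetOut (S : Finset ℕ) (k : ℕ) (P : Term) : Term :=
  (S.sort (· ≤ ·)).foldr (fun a t => t.renameOut (a + k) a) P

/-- Result of the left structural (duplication) action
`(P (α̂₁,α̂₂)>α) α̂ † x̂ Q  →  P ⟨α₁,α₂ † x̂ Q⟩`: the two indexed copies of `Q`
are cut against `α₁` and `α₂` and the doubled free names of the copies are
joined back by duplicators. -/
def duplResL (P : Term) (a1 a2 x : ℕ) (Q : Term) : Term :=
  clChain (P.maxName + Q.maxName + x + 1) (Q.fin.erase x)
    (crChain (P.maxName + Q.maxName + x + 1) Q.fout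
      (lcut (lcut P a1 (x + (P.maxName + Q.maxName + x + 1))
          (Q.shift (P.maxName + Q.maxName + x + 1)))
        a2 (x + 2 * (P.maxName + Q.maxName + x + 1))
        (Q.shift (2 * (P.maxName + Q.maxName + x + 1)))))

/-- Result of the right structural (duplication) action, symmetrically. -/
def duplResR (P : Term) (a x1 x2 : ℕ) (Q : Term) : Term :=
  clChain (P.maxName + Q.maxName + a + 1) P.fin
    (crChain (P.maxName + Q.maxName + a + 1) (P.fout.erase a)
      (rcut (P.shift (P.maxName + Q.maxName + a + 1))
        (a + (P.maxName + Q.maxName + a + 1)) x1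
        (rcut (P.shift (2 * (P.maxName + Q.maxName + a + 1)))
          (a + 2 * (P.maxName + Q.maxName + a + 1)) x2 Q)))

end Term

open Term in
/-- The root reduction rules of the *x-calculus: activation, structural
(erasure and duplication), deactivation, logical, and propagation rules. -/
inductive Step : Term → Term → Prop
  -- activation rules
  | actL {P : Term} {a x : ℕ} {Q : Term} : ¬ LPrincipalOut P a →
      Step (.cut P a x Q) (.lcut P a x Q)
  | actR {P : Term} {a x : ℕ} {Q : Term} : ¬ LPrincipalIn Q x →
      Step (.cut P a x Q) (.rcut P a x Q)
  -- deactivation rules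
  | deactL {P : Term} {a x : ℕ} {Q : Term} : LPrincipalOut P a →
      Step (.lcut P a x Q) (.cut P a x Q)
  | deactR {P : Term} {a x : ℕ} {Q : Term} : LPrincipalIn Q x →
      Step (.rcut P a x Q) (.cut P a x Q)
  -- logical actions
  | renL {y a x : ℕ} {Q : Term} :
      Step (.cut (.caps y a) a x Q) (Q.renameIn y x)
  | renR {P : Term} {a x b : ℕ} :
      Step (.cut P a x (.caps x b)) (P.renameOut b a)
  | insert1 {y : ℕ} {P : Term} {b a x : ℕ} {Q : Term} {g z : ℕ} {R : Term} :
      Step (.cut (.exp y P b a) a x (.imp Q g x z R))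
        (.cut (.cut Q g y P) b z R)
  | insert2 {y : ℕ} {P : Term} {b a x : ℕ} {Q : Term} {g z : ℕ} {R : Term} :
      Step (.cut (.exp y P b a) a x (.imp Q g x z R))
        (.cut Q g y (.cut P b z R))
  -- structural actions: erasure
  | erasL {P : Term} {a x : ℕ} {Q : Term} :
      Step (.lcut (.wr P a) a x Q) (wChain (Q.fin.erase x) Q.fout P)
  | erasR {P : Term} {a x : ℕ} {Q : Term} :
      Step (.rcut P a x (.wl x Q)) (wChain P.fin (P.fout.erase a) Q)
  -- structural actions: duplication
  | duplL {P : Term} {a1 a2 a x : ℕ} {Q : Term} :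
      Step (.lcut (.cr P a1 a2 a) a x Q) (duplResL P a1 a2 x Q)
  | duplR {P : Term} {a x x1 x2 : ℕ} {Q : Term} :
      Step (.rcut P a x (.cl x x1 x2 Q)) (duplResR P a x1 x2 Q)
  -- left propagation rules
  | propExpL {y : ℕ} {P : Term} {g b a x : ℕ} {R : Term} : b ≠ a →
      Step (.lcut (.exp y P g b) a x R) (.exp y (.lcut P a x R) g b)
  | propImpLL {P : Term} {g y z : ℕ} {Q : Term} {a x : ℕ} {R : Term} :
      a ∈ P.fout.erase g →
      Step (.lcut (.imp P g y z Q) a x R) (.imp (.lcut P a x R) g y z Q)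
  | propImpLR {P : Term} {g y z : ℕ} {Q : Term} {a x : ℕ} {R : Term} :
      a ∈ Q.fout →
      Step (.lcut (.imp P g y z Q) a x R) (.imp P g y z (.lcut Q a x R))
  | propCutLL {P : Term} {g y : ℕ} {Q : Term} {a x : ℕ} {R : Term} :
      a ∈ P.fout.erase g →
      Step (.lcut (.cut P g y Q) a x R) (.cut (.lcut P a x R) g y Q)
  | propCutLR {P : Term} {g y : ℕ} {Q : Term} {a x : ℕ} {R : Term} :
      a ∈ Q.fout → Q ≠ .caps y a →
      Step (.lcut (.cut P g y Q) a x R) (.cut P g y (.lcut Q a x R))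
  | propCutCapsL {P : Term} {g z a x : ℕ} {R : Term} :
      Step (.lcut (.cut P g z (.caps z a)) a x R) (.cut P g x R)
  | propWlL {z : ℕ} {P : Term} {a x : ℕ} {R : Term} :
      Step (.lcut (.wl z P) a x R) (.wl z (.lcut P a x R))
  | propWrL {P : Term} {g a x : ℕ} {R : Term} : g ≠ a →
      Step (.lcut (.wr P g) a x R) (.wr (.lcut P a x R) g)
  | propClL {z z1 z2 : ℕ} {P : Term} {a x : ℕ} {R : Term} :
      Step (.lcut (.cl z z1 z2 P) a x R) (.cl z z1 z2 (.lcut P a x R))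
  | propCrL {P : Term} {g1 g2 g a x : ℕ} {R : Term} : g ≠ a →
      Step (.lcut (.cr P g1 g2 g) a x R) (.cr (.lcut P a x R) g1 g2 g)
  -- right propagation rules
  | propExpR {P : Term} {a x y : ℕ} {Q : Term} {g b : ℕ} : y ≠ x →
      Step (.rcut P a x (.exp y Q g b)) (.exp y (.rcut P a x Q) g b)
  | propImpRL {P : Term} {a x : ℕ} {Q : Term} {g z w : ℕ} {R : Term} :
      z ≠ x → x ∈ Q.fin →
      Step (.rcut P a x (.imp Q g z w R)) (.imp (.rcut P a x Q) g z w R)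
  | propImpRR {P : Term} {a x : ℕ} {Q : Term} {g z w : ℕ} {R : Term} :
      z ≠ x → x ∈ R.fin.erase w →
      Step (.rcut P a x (.imp Q g z w R)) (.imp Q g z w (.rcut P a x R))
  | propCutRL {P : Term} {a x : ℕ} {Q : Term} {g y : ℕ} {R : Term} :
      x ∈ Q.fin → Q ≠ .caps x g →
      Step (.rcut P a x (.cut Q g y R)) (.cut (.rcut P a x Q) g y R)
  | propCutRR {P : Term} {a x : ℕ} {Q : Term} {g y : ℕ} {R : Term} :
      x ∈ R.fin.erase y →
      Step (.rcut P a x (.cut Q g y R)) (.cut Q g y (.rcut P a x R))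
  | propCutCapsR {P : Term} {a x g y : ℕ} {R : Term} :
      Step (.rcut P a x (.cut (.caps x g) g y R)) (.cut P a y R)
  | propWlR {P : Term} {a x z : ℕ} {Q : Term} : z ≠ x →
      Step (.rcut P a x (.wl z Q)) (.wl z (.rcut P a x Q))
  | propWrR {P : Term} {a x : ℕ} {Q : Term} {g : ℕ} :
      Step (.rcut P a x (.wr Q g)) (.wr (.rcut P a x Q) g)
  | propClR {P : Term} {a x z z1 z2 : ℕ} {Q : Term} : z ≠ x →
      Step (.rcut P a x (.cl z z1 z2 Q)) (.cl z z1 z2 (.rcut P a x Q))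
  | propCrR {P : Term} {a x : ℕ} {Q : Term} {g1 g2 g : ℕ} :
      Step (.rcut P a x (.cr Q g1 g2 g)) (.cr (.rcut P a x Q) g1 g2 g)

/-- The reduction relation `→` of *x: contextual closure of the root rules. -/
inductive Red : Term → Term → Prop
  | ctx {P Q : Term} (C : Ctx) : Step P Q → Red (C.fill P) (C.fill Q)

/-- The root simplification rules `(s_L)` and `(s_R)`. -/
inductive SimpStep : Term → Term → Prop
  | sL {x y z : ℕ} {P : Term} :
      SimpStep (.cl x y z (.wl z P)) (P.renameIn x y)
  | sR {P : Term} {g b a : ℕ} :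
      SimpStep (.cr (.wr P g) b g a) (P.renameOut a b)

/-- The simplification relation `⇢`: contextual closure of `(s_L)`, `(s_R)`. -/
inductive Simp : Term → Term → Prop
  | ctx {P Q : Term} (C : Ctx) : SimpStep P Q → Simp (C.fill P) (C.fill Q)

/-- Typing contexts: finite sets of (name, type) declarations. -/
abbrev Cx : Type := Finset (ℕ × Ty)

/-- The simply typed *x system (corresponding to the sequent calculus G1 with
explicit weakening and contraction): `P : Γ ⊢ Δ`. -/
inductive Types : Term → Cx → Cx → Prop
  | ax (x a : ℕ) (A : Ty) : Types (.caps x a) {(x, A)} {(a, A)}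
  | arrR {P : Term} {Γ Δ : Cx} {x b a : ℕ} {A B : Ty} :
      Types P (insert (x, A) Γ) (insert (b, B) Δ) →
      Types (.exp x P b a) Γ (insert (a, Ty.arrow A B) Δ)
  | arrL {P Q : Term} {Γ Δ Γ' Δ' : Cx} {a x y : ℕ} {A B : Ty} :
      Types P Γ (insert (a, A) Δ) → Types Q (insert (y, B) Γ') Δ' →
      Types (.imp P a x y Q) (insert (x, Ty.arrow A B) (Γ ∪ Γ')) (Δ ∪ Δ')
  | cut {P Q : Term} {Γ Δ Γ' Δ' : Cx} {a x : ℕ} {A : Ty} :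
      Types P Γ (insert (a, A) Δ) → Types Q (insert (x, A) Γ') Δ' →
      Types (.cut P a x Q) (Γ ∪ Γ') (Δ ∪ Δ')
  | lcut {P Q : Term} {Γ Δ Γ' Δ' : Cx} {a x : ℕ} {A : Ty} :
      Types P Γ (insert (a, A) Δ) → Types Q (insert (x, A) Γ') Δ' →
      Types (.lcut P a x Q) (Γ ∪ Γ') (Δ ∪ Δ')
  | rcut {P Q : Term} {Γ Δ Γ' Δ' : Cx} {a x : ℕ} {A : Ty} :
      Types P Γ (insert (a, A) Δ) → Types Q (insert (x, A) Γ') Δ' →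
      Types (.rcut P a x Q) (Γ ∪ Γ') (Δ ∪ Δ')
  | weakL {P : Term} {Γ Δ : Cx} {x : ℕ} {A : Ty} :
      Types P Γ Δ → Types (.wl x P) (insert (x, A) Γ) Δ
  | weakR {P : Term} {Γ Δ : Cx} {a : ℕ} {A : Ty} :
      Types P Γ Δ → Types (.wr P a) Γ (insert (a, A) Δ)
  | contL {P : Term} {Γ Δ : Cx} {x x1 x2 : ℕ} {A : Ty} :
      Types P (insert (x1, A) (insert (x2, A) Γ)) Δ →
      Types (.cl x x1 x2 P) (insert (x, A) Γ) Δ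
  | contR {P : Term} {Γ Δ : Cx} {a1 a2 a : ℕ} {A : Ty} :
      Types P Γ (insert (a1, A) (insert (a2, A) Δ)) →
      Types (.cr P a1 a2 a) Γ (insert (a, A) Δ)

end StarX
namespace StarX

/-- Terms of the X-calculus (capsules, exporters, importers, cuts, active cuts);
not necessarily linear. -/
inductive XTerm : Type
  | caps : ℕ → ℕ → XTerm
  | exp  : ℕ → XTerm → ℕ → ℕ → XTerm
  | imp  : XTerm → ℕ → ℕ → ℕ → XTerm → XTerm
  | cut  : XTerm → ℕ → ℕ → XTerm → XTerm
  | lcut : XTerm → ℕ → ℕ → XTerm → XTerm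
  | rcut : XTerm → ℕ → ℕ → XTerm → XTerm
  deriving DecidableEq

namespace XTerm

/-- Free innames of an X-term. -/
def fin : XTerm → Finset ℕ
  | caps x _ => {x}
  | exp x P _ _ => P.fin.erase x
  | imp P _ x y Q => insert x (P.fin ∪ Q.fin.erase y)
  | cut P _ x Q => P.fin ∪ Q.fin.erase x
  | lcut P _ x Q => P.fin ∪ Q.fin.erase x
  | rcut P _ x Q => P.fin ∪ Q.fin.erase x

/-- Free outnames of an X-term. -/
def fout : XTerm → Finset ℕ
  | caps _ a => {a}
  | exp _ P b a => insert a (P.fout.erase b)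
  | imp P a _ _ Q => P.fout.erase a ∪ Q.fout
  | cut P a _ Q => P.fout.erase a ∪ Q.fout
  | lcut P a _ Q => P.fout.erase a ∪ Q.fout
  | rcut P a _ Q => P.fout.erase a ∪ Q.fout

/-- Rename all free occurrences of the inname `o` by `n` in an X-term. -/
def renameIn (n o : ℕ) : XTerm → XTerm
  | caps x a => caps (if x = o then n else x) a
  | exp x P b a => if x = o then exp x P b a else exp x (P.renameIn n o) b a
  | imp P a x y Q =>
      imp (P.renameIn n o) a (if x = o then n else x) y
        (if y = o then Q else Q.renameIn n o)
  | cut P a x Q => cut (P.renameIn n o) a x (if x = o then Q else Q.renameIn n o)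
  | lcut P a x Q => lcut (P.renameIn n o) a x (if x = o then Q else Q.renameIn n o)
  | rcut P a x Q => rcut (P.renameIn n o) a x (if x = o then Q else Q.renameIn n o)

/-- Rename all free occurrences of the outname `o` by `n` in an X-term. -/
def renameOut (n o : ℕ) : XTerm → XTerm
  | caps x a => caps x (if a = o then n else a)
  | exp x P b a =>
      exp x (if b = o then P else P.renameOut n o) b (if a = o then n else a)
  | imp P a x y Q =>
      imp (if a = o then P else P.renameOut n o) a x y (Q.renameOut n o)
  | cut P a x Q => cut (if a = o then P else P.renameOut n o) a x (Q.renameOut n o)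
  | lcut P a x Q => lcut (if a = o then P else P.renameOut n o) a x (Q.renameOut n o)
  | rcut P a x Q => rcut (if a = o then P else P.renameOut n o) a x (Q.renameOut n o)

end XTerm

/-- `P` freshly introduces the inname `x`. -/
inductive FreshIntroIn : XTerm → ℕ → Prop
  | caps (x a : ℕ) : FreshIntroIn (.caps x a) x
  | imp {Q : XTerm} {a x y : ℕ} {R : XTerm} : x ∉ Q.fin → x ∉ R.fin →
      FreshIntroIn (.imp Q a x y R) x

/-- `P` freshly introduces the outname `α`. -/
inductive FreshIntroOut : XTerm → ℕ → Prop
  | caps (x a : ℕ) : FreshIntroOut (.caps x a) a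
  | exp {x : ℕ} {Q : XTerm} {b a : ℕ} : a ∉ Q.fout →
      FreshIntroOut (.exp x Q b a) a

/-- X-calculus one-hole contexts. -/
inductive XCtx : Type
  | hole : XCtx
  | exp  : ℕ → XCtx → ℕ → ℕ → XCtx
  | impL : XCtx → ℕ → ℕ → ℕ → XTerm → XCtx
  | impR : XTerm → ℕ → ℕ → ℕ → XCtx → XCtx
  | cutL : XCtx → ℕ → ℕ → XTerm → XCtx
  | cutR : XTerm → ℕ → ℕ → XCtx → XCtx

def XCtx.fill : XCtx → XTerm → XTerm
  | .hole, P => P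
  | .exp x C b a, P => .exp x (C.fill P) b a
  | .impL C a x y Q, P => .imp (C.fill P) a x y Q
  | .impR Q a x y C, P => .imp Q a x y (C.fill P)
  | .cutL C a x Q, P => .cut (C.fill P) a x Q
  | .cutR Q a x C, P => .cut Q a x (C.fill P)

open XTerm in
/-- The root reduction rules of the X-calculus: logical rules (renamings and
insertion, applying to freshly introduced names), activation rules, and the
left/right propagation rules (including garbage collection, duplication,
deactivation and the capsule exceptions). -/
inductive StepX : XTerm → XTerm → Prop
  -- logical rules
  | capRen {y a x b : ℕ} :
      StepX (.cut (.caps y a) a x (.caps x b)) (.caps y b)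
  | expRen {y : ℕ} {P : XTerm} {b a x g : ℕ} : a ∉ P.fout →
      StepX (.cut (.exp y P b a) a x (.caps x g)) (.exp y P b g)
  | impRen {y a x : ℕ} {Q : XTerm} {b z : ℕ} {R : XTerm} :
      x ∉ Q.fin → x ∉ R.fin →
      StepX (.cut (.caps y a) a x (.imp Q b x z R)) (.imp Q b y z R)
  | insert1 {y : ℕ} {P : XTerm} {b a x : ℕ} {Q : XTerm} {g z : ℕ} {R : XTerm} :
      a ∉ P.fout → x ∉ Q.fin → x ∉ R.fin →
      StepX (.cut (.exp y P b a) a x (.imp Q g x z R))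
        (.cut (.cut Q g y P) b z R)
  | insert2 {y : ℕ} {P : XTerm} {b a x : ℕ} {Q : XTerm} {g z : ℕ} {R : XTerm} :
      a ∉ P.fout → x ∉ Q.fin → x ∉ R.fin →
      StepX (.cut (.exp y P b a) a x (.imp Q g x z R))
        (.cut Q g y (.cut P b z R))
  -- activation rules
  | actL {P : XTerm} {a x : ℕ} {Q : XTerm} : ¬ FreshIntroOut P a →
      StepX (.cut P a x Q) (.lcut P a x Q)
  | actR {P : XTerm} {a x : ℕ} {Q : XTerm} : ¬ FreshIntroIn Q x →
      StepX (.cut P a x Q) (.rcut P a x Q)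
  -- left propagation rules
  | gcL {P : XTerm} {a x : ℕ} {Q : XTerm} : a ∉ P.fout →
      StepX (.lcut P a x Q) P
  | deactL {P : XTerm} {a x : ℕ} {Q : XTerm} : FreshIntroOut P a →
      StepX (.lcut P a x Q) (.cut P a x Q)
  | propExpL {y : ℕ} {P : XTerm} {g b a x : ℕ} {R : XTerm} : b ≠ a →
      StepX (.lcut (.exp y P g b) a x R) (.exp y (.lcut P a x R) g b)
  | propExpDuplDeactL {y : ℕ} {P : XTerm} {g a x : ℕ} {R : XTerm} :
      a ∈ P.fout →
      StepX (.lcut (.exp y P g a) a x R)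
        (.cut (.exp y (.lcut P a x R) g a) a x R)
  | propImpL {P : XTerm} {g y z : ℕ} {Q : XTerm} {a x : ℕ} {R : XTerm} :
      StepX (.lcut (.imp P g y z Q) a x R)
        (.imp (.lcut P a x R) g y z (.lcut Q a x R))
  | propCutL {P : XTerm} {g y : ℕ} {Q : XTerm} {a x : ℕ} {R : XTerm} :
      Q ≠ .caps y a →
      StepX (.lcut (.cut P g y Q) a x R)
        (.cut (.lcut P a x R) g y (.lcut Q a x R))
  | propCutCapsL {P : XTerm} {g z a x : ℕ} {R : XTerm} :
      StepX (.lcut (.cut P g z (.caps z a)) a x R) (.cut P g x R)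
  -- right propagation rules
  | gcR {P : XTerm} {a x : ℕ} {Q : XTerm} : x ∉ Q.fin →
      StepX (.rcut P a x Q) Q
  | deactR {P : XTerm} {a x : ℕ} {Q : XTerm} : FreshIntroIn Q x →
      StepX (.rcut P a x Q) (.cut P a x Q)
  | propExpR {P : XTerm} {a x y : ℕ} {Q : XTerm} {g b : ℕ} : y ≠ x →
      StepX (.rcut P a x (.exp y Q g b)) (.exp y (.rcut P a x Q) g b)
  | propImpR {P : XTerm} {a x : ℕ} {Q : XTerm} {g w z : ℕ} {R : XTerm} :
      w ≠ x →
      StepX (.rcut P a x (.imp Q g w z R))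
        (.imp (.rcut P a x Q) g w z (.rcut P a x R))
  | propImpDuplDeactR {P : XTerm} {a x : ℕ} {Q : XTerm} {g z : ℕ} {R : XTerm} :
      x ∈ Q.fin ∪ R.fin →
      StepX (.rcut P a x (.imp Q g x z R))
        (.cut P a x (.imp (.rcut P a x Q) g x z (.rcut P a x R)))
  | propCutR {P : XTerm} {a x : ℕ} {Q : XTerm} {g y : ℕ} {R : XTerm} :
      Q ≠ .caps x g →
      StepX (.rcut P a x (.cut Q g y R))
        (.cut (.rcut P a x Q) g y (.rcut P a x R))
  | propCutCapsR {P : XTerm} {a x g y : ℕ} {R : XTerm} :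
      StepX (.rcut P a x (.cut (.caps x g) g y R)) (.cut P a y R)

/-- The reduction relation `→` of X: contextual closure of the root rules. -/
inductive RedX : XTerm → XTerm → Prop
  | ctx {P Q : XTerm} (C : XCtx) : StepX P Q → RedX (C.fill P) (C.fill Q)

/-- The simply typed X system (corresponding to G3, with implicit structural
rules): `P : Γ ⊢ Δ`. -/
inductive XTypes : XTerm → Cx → Cx → Prop
  | ax {Γ Δ : Cx} {x a : ℕ} {A : Ty} : (x, A) ∈ Γ → (a, A) ∈ Δ →
      XTypes (.caps x a) Γ Δ
  | arrR {P : XTerm} {Γ Δ : Cx} {x b a : ℕ} {A B : Ty} :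
      XTypes P (insert (x, A) Γ) (insert (b, B) Δ) →
      XTypes (.exp x P b a) Γ (insert (a, Ty.arrow A B) Δ)
  | arrL {P Q : XTerm} {Γ Δ : Cx} {a x y : ℕ} {A B : Ty} :
      XTypes P Γ (insert (a, A) Δ) → XTypes Q (insert (y, B) Γ) Δ →
      XTypes (.imp P a x y Q) (insert (x, Ty.arrow A B) Γ) Δ
  | cut {P Q : XTerm} {Γ Δ : Cx} {a x : ℕ} {A : Ty} :
      XTypes P Γ (insert (a, A) Δ) → XTypes Q (insert (x, A) Γ) Δ →
      XTypes (.cut P a x Q) Γ Δ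
  | lcut {P Q : XTerm} {Γ Δ : Cx} {a x : ℕ} {A : Ty} :
      XTypes P Γ (insert (a, A) Δ) → XTypes Q (insert (x, A) Γ) Δ →
      XTypes (.lcut P a x Q) Γ Δ
  | rcut {P Q : XTerm} {Γ Δ : Cx} {a x : ℕ} {A : Ty} :
      XTypes P Γ (insert (a, A) Δ) → XTypes Q (insert (x, A) Γ) Δ →
      XTypes (.rcut P a x Q) Γ Δ

/-- The encoding `⌊·⌋ : *x → X`: a homomorphism on capsules, exporters,
  importers and cuts, erasing erasers and translating duplicators by renaming
the two copies to the duplicator's introduced name. -/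
def floor : Term → XTerm
  | .caps x a => .caps x a
  | .exp x P b a => .exp x (floor P) b a
  | .imp P a x y Q => .imp (floor P) a x y (floor Q)
  | .cut P a x Q => .cut (floor P) a x (floor Q)
  | .lcut P a x Q => .lcut (floor P) a x (floor Q)
  | .rcut P a x Q => .rcut (floor P) a x (floor Q)
  | .wl _ P => floor P
  | .wr P _ => floor P
  | .cl x x1 x2 P => ((floor P).renameIn x x1).renameIn x x2
  | .cr P a1 a2 a => ((floor P).renameOut a a1).renameOut a a2

namespace Term

/-- Potential eraser: add a left eraser for `x` if `x` does not occur. -/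
def wlIf (x : ℕ) (P : Term) : Term := if x ∈ P.fin then P else .wl x P

/-- Potential eraser: add a right eraser for `a` if `a` does not occur. -/
def wrIf (a : ℕ) (P : Term) : Term := if a ∈ P.fout then P else .wr P a

/-- Potential contraction: rename the shared innames `SI` and outnames `SO` of
`P` and `Q` apart (to their `+k` and `+2k` copies), build the binary construct,
and join the copies with duplicators. -/
def join2 (k : ℕ) (SI SO : Finset ℕ) (P Q : Term)
    (build : Term → Term → Term) : Term :=
  clChain k SI (crChain k SO
    (build (renameSetOut SO k (renameSetIn SI k P))
           (renameSetOut SO (2 * k) (renameSetIn SI (2 * k) Q))))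

end Term

open Term in
/-- The encoding `⟦·⟧ : X → *x`: multiple free occurrences of a name are
renamed apart and joined with duplicators; erasers are inserted for binders
binding no occurrence and for names introduced over a term in which they occur. -/
def encode : XTerm → Term
  | .caps x a => .caps x a
  | .exp x P b a =>
      let P' := wrIf b (wlIf x (encode P))
      if a ∈ P'.fout then
        .cr (.exp x (P'.renameOut (a + (P'.maxName + a + 1)) a) b
              (a + 2 * (P'.maxName + a + 1)))
          (a + (P'.maxName + a + 1)) (a + 2 * (P'.maxName + a + 1)) a
      else .exp x P' b a
  | .imp P a x y Q =>
      let P' := wrIf a (encode P)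
      let Q' := wlIf y (encode Q)
      let k := P'.maxName + Q'.maxName + a + x + y + 1
      if x ∈ P'.fin ∪ Q'.fin.erase y then
        let P'' := P'.renameIn (x + 5 * k) x
        let Q'' := Q'.renameIn (x + 5 * k) x
        .cl x (x + 5 * k) (x + 6 * k)
          (join2 k (P''.fin ∩ Q''.fin.erase y) ((P''.fout.erase a) ∩ Q''.fout)
            P'' Q'' (fun p q => .imp p a (x + 6 * k) y q))
      else
        join2 k (P'.fin ∩ Q'.fin.erase y) ((P'.fout.erase a) ∩ Q'.fout)
          P' Q' (fun p q => .imp p a x y q)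
  | .cut P a x Q =>
      let P' := wrIf a (encode P)
      let Q' := wlIf x (encode Q)
      join2 (P'.maxName + Q'.maxName + a + x + 1)
        (P'.fin ∩ Q'.fin.erase x) ((P'.fout.erase a) ∩ Q'.fout)
        P' Q' (fun p q => .cut p a x q)
  | .lcut P a x Q =>
      let P' := wrIf a (encode P)
      let Q' := wlIf x (encode Q)
      join2 (P'.maxName + Q'.maxName + a + x + 1)
        (P'.fin ∩ Q'.fin.erase x) ((P'.fout.erase a) ∩ Q'.fout)
        P' Q' (fun p q => .lcut p a x q)
  | .rcut P a x Q =>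
      let P' := wrIf a (encode P)
      let Q' := wlIf x (encode Q)
      join2 (P'.maxName + Q'.maxName + a + x + 1)
        (P'.fin ∩ Q'.fin.erase x) ((P'.fout.erase a) ∩ Q'.fout)
        P' Q' (fun p q => .rcut p a x q)

end StarX

/-! The free names of `⟦P⟧` are computed constructor by constructor. A potential eraser adds
only the name that the enclosing binder removes again. A potential contraction renames each
shared name `z` to the copies `z + k` and `z + 2 * k`, where `k` exceeds every name of the two
subterms; the copies are therefore fresh, the renamings act injectively on free names, and the
duplicators that bind the copies reintroduce exactly the shared names. The duplicators on the
outname of an exporter and on the principal inname of an importer are handled the same way. -/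

namespace StarX
namespace Term

def allIn : Term → Finset ℕ
  | caps x _ => {x}
  | exp x P _ _ => insert x P.allIn
  | imp P _ x y Q => insert x (insert y (P.allIn ∪ Q.allIn))
  | cut P _ x Q => insert x (P.allIn ∪ Q.allIn)
  | lcut P _ x Q => insert x (P.allIn ∪ Q.allIn)
  | rcut P _ x Q => insert x (P.allIn ∪ Q.allIn)
  | wl x P => insert x P.allIn
  | wr P _ => P.allIn
  | cl x x1 x2 P => insert x (insert x1 (insert x2 P.allIn))
  | cr P _ _ _ => P.allIn

def allOut : Term → Finset ℕ
  | caps _ a => {a}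
  | exp _ P b a => insert b (insert a P.allOut)
  | imp P a _ _ Q => insert a (P.allOut ∪ Q.allOut)
  | cut P a _ Q => insert a (P.allOut ∪ Q.allOut)
  | lcut P a _ Q => insert a (P.allOut ∪ Q.allOut)
  | rcut P a _ Q => insert a (P.allOut ∪ Q.allOut)
  | wl _ P => P.allOut
  | wr P a => insert a P.allOut
  | cl _ _ _ P => P.allOut
  | cr P a1 a2 a => insert a (insert a1 (insert a2 P.allOut))

theorem fin_subset_allIn (P : Term) : P.fin ⊆ P.allIn := by
  induction P <;> intro n hn <;> simp_all [fin, allIn] <;> grind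

theorem fout_subset_allOut (P : Term) : P.fout ⊆ P.allOut := by
  induction P <;> intro n hn <;> simp_all [fout, allOut] <;> grind

theorem le_maxName_of_mem_allIn {P : Term} {n : ℕ} (hn : n ∈ P.allIn) : n ≤ P.maxName := by
  induction P <;> simp_all [allIn, maxName] <;> grind

theorem le_maxName_of_mem_allOut {P : Term} {n : ℕ} (hn : n ∈ P.allOut) : n ≤ P.maxName := by
  induction P <;> simp_all [allOut, maxName] <;> grind

theorem lt_of_mem_allIn {P : Term} {k : ℕ} (h : P.maxName < k) (n : ℕ) (hn : n ∈ P.allIn) :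
    n < k :=
  (le_maxName_of_mem_allIn hn).trans_lt h

theorem lt_of_mem_allOut {P : Term} {k : ℕ} (h : P.maxName < k) (n : ℕ) (hn : n ∈ P.allOut) :
    n < k :=
  (le_maxName_of_mem_allOut hn).trans_lt h

theorem fout_renameIn (n o : ℕ) (P : Term) : (P.renameIn n o).fout = P.fout := by
  induction P <;> simp only [renameIn] <;> (try split_ifs) <;> simp_all [fout]

theorem fin_renameOut (n o : ℕ) (P : Term) : (P.renameOut n o).fin = P.fin := by
  induction P <;> simp only [renameOut] <;> (try split_ifs) <;> simp_all [fin]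

theorem allOut_renameIn (n o : ℕ) (P : Term) : (P.renameIn n o).allOut = P.allOut := by
  induction P <;> simp only [renameIn] <;> (try split_ifs) <;> simp_all [allOut]

theorem mem_allIn_renameIn {n o m : ℕ} {P : Term} (hm : m ∈ (P.renameIn n o).allIn) :
    m = n ∨ m ∈ P.allIn := by
  induction P <;> simp only [renameIn] at hm <;> (try split_ifs at hm) <;>
    simp_all [allIn] <;> grind

theorem mem_allOut_renameOut {n o m : ℕ} {P : Term} (hm : m ∈ (P.renameOut n o).allOut) :
    m = n ∨ m ∈ P.allOut := by
  induction P <;> simp only [renameOut] at hm <;> (try split_ifs at hm) <;>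
    simp_all [allOut] <;> grind

theorem mem_fin_renameIn {n o : ℕ} {P : Term} (hn : n ∉ P.allIn) (m : ℕ) :
    m ∈ (P.renameIn n o).fin ↔ m ∈ P.fin ∧ m ≠ o ∨ m = n ∧ o ∈ P.fin := by
  induction P generalizing m <;> simp only [renameIn] <;> (try split_ifs) <;>
    simp_all [allIn, fin] <;> grind

theorem mem_fout_renameOut {n o : ℕ} {P : Term} (hn : n ∉ P.allOut) (m : ℕ) :
    m ∈ (P.renameOut n o).fout ↔ m ∈ P.fout ∧ m ≠ o ∨ m = n ∧ o ∈ P.fout := by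
  induction P generalizing m <;> simp only [renameOut] <;> (try split_ifs) <;>
    simp_all [allOut, fout] <;> grind


section RenameSet

variable {k : ℕ} {P : Term}

theorem mem_allIn_foldr_renameIn {l : List ℕ} {m : ℕ}
    (hm : m ∈ (l.foldr (fun z t => t.renameIn (z + k) z) P).allIn) :
    m ∈ P.allIn ∨ ∃ z ∈ l, m = z + k := by
  induction l with
  | nil => exact Or.inl hm
  | cons z l ih =>
    rcases mem_allIn_renameIn hm with rfl | hm
    · exact Or.inr ⟨z, List.mem_cons_self, rfl⟩
    · obtain hm | ⟨w, hw, rfl⟩ := ih hm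
      exacts [Or.inl hm, Or.inr ⟨w, List.mem_cons_of_mem z hw, rfl⟩]

theorem mem_allOut_foldr_renameOut {l : List ℕ} {m : ℕ}
    (hm : m ∈ (l.foldr (fun z t => t.renameOut (z + k) z) P).allOut) :
    m ∈ P.allOut ∨ ∃ z ∈ l, m = z + k := by
  induction l with
  | nil => exact Or.inl hm
  | cons z l ih =>
    rcases mem_allOut_renameOut hm with rfl | hm
    · exact Or.inr ⟨z, List.mem_cons_self, rfl⟩
    · obtain hm | ⟨w, hw, rfl⟩ := ih hm
      exacts [Or.inl hm, Or.inr ⟨w, List.mem_cons_of_mem z hw, rfl⟩]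

theorem mem_fin_foldr_renameIn {l : List ℕ} (hl : l.Nodup)
    (hfresh : ∀ z ∈ l, z + k ∉ P.allIn) (hdisj : ∀ z ∈ l, ∀ w ∈ l, z ≠ w + k) (m : ℕ) :
    m ∈ (l.foldr (fun z t => t.renameIn (z + k) z) P).fin ↔
      m ∈ P.fin ∧ m ∉ l ∨ ∃ z ∈ l, z ∈ P.fin ∧ m = z + k := by
  induction l generalizing m with
  | nil => simp
  | cons z l ih =>
    obtain ⟨hzl, hl⟩ := List.nodup_cons.mp hl
    have ih := ih hl (fun w hw => hfresh w (List.mem_cons_of_mem z hw))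
      (fun w hw u hu => hdisj w (List.mem_cons_of_mem z hw) u (List.mem_cons_of_mem z hu))
    have hz : z + k ∉ (l.foldr (fun z t => t.renameIn (z + k) z) P).allIn := fun h => by
      obtain h | ⟨w, hw, hzw⟩ := mem_allIn_foldr_renameIn h
      · exact hfresh z List.mem_cons_self h
      · exact hzl (by rwa [Nat.add_right_cancel hzw])
    rw [List.foldr_cons, mem_fin_renameIn hz, ih, ih]
    grind

theorem mem_fout_foldr_renameOut {l : List ℕ} (hl : l.Nodup)
    (hfresh : ∀ z ∈ l, z + k ∉ P.allOut) (hdisj : ∀ z ∈ l, ∀ w ∈ l, z ≠ w + k) (m : ℕ) :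
    m ∈ (l.foldr (fun z t => t.renameOut (z + k) z) P).fout ↔
      m ∈ P.fout ∧ m ∉ l ∨ ∃ z ∈ l, z ∈ P.fout ∧ m = z + k := by
  induction l generalizing m with
  | nil => simp
  | cons z l ih =>
    obtain ⟨hzl, hl⟩ := List.nodup_cons.mp hl
    have ih := ih hl (fun w hw => hfresh w (List.mem_cons_of_mem z hw))
      (fun w hw u hu => hdisj w (List.mem_cons_of_mem z hw) u (List.mem_cons_of_mem z hu))
    have hz : z + k ∉ (l.foldr (fun z t => t.renameOut (z + k) z) P).allOut := fun h => by
      obtain h | ⟨w, hw, hzw⟩ := mem_allOut_foldr_renameOut h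
      · exact hfresh z List.mem_cons_self h
      · exact hzl (by rwa [Nat.add_right_cancel hzw])
    rw [List.foldr_cons, mem_fout_renameOut hz, ih, ih]
    grind

variable {S : Finset ℕ}

theorem mem_fin_renameSetIn (hfresh : ∀ z ∈ S, z + k ∉ P.allIn)
    (hdisj : ∀ z ∈ S, ∀ w ∈ S, z ≠ w + k) (m : ℕ) :
    m ∈ (renameSetIn S k P).fin ↔ m ∈ P.fin ∧ m ∉ S ∨ ∃ z ∈ S, z ∈ P.fin ∧ m = z + k := by
  unfold renameSetIn
  simpa only [Finset.mem_sort] using mem_fin_foldr_renameIn (S.sort_nodup (· ≤ ·))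
    (by simpa only [Finset.mem_sort]) (by simpa only [Finset.mem_sort]) m

theorem mem_fout_renameSetOut (hfresh : ∀ z ∈ S, z + k ∉ P.allOut)
    (hdisj : ∀ z ∈ S, ∀ w ∈ S, z ≠ w + k) (m : ℕ) :
    m ∈ (renameSetOut S k P).fout ↔ m ∈ P.fout ∧ m ∉ S ∨ ∃ z ∈ S, z ∈ P.fout ∧ m = z + k := by
  unfold renameSetOut
  simpa only [Finset.mem_sort] using mem_fout_foldr_renameOut (S.sort_nodup (· ≤ ·))
    (by simpa only [Finset.mem_sort]) (by simpa only [Finset.mem_sort]) m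

theorem fout_renameSetIn : (renameSetIn S k P).fout = P.fout := by
  unfold renameSetIn
  induction S.sort (· ≤ ·) <;> simp_all [fout_renameIn]

theorem allOut_renameSetIn : (renameSetIn S k P).allOut = P.allOut := by
  unfold renameSetIn
  induction S.sort (· ≤ ·) <;> simp_all [allOut_renameIn]

theorem fin_renameSetOut : (renameSetOut S k P).fin = P.fin := by
  unfold renameSetOut
  induction S.sort (· ≤ ·) <;> simp_all [fin_renameOut]

end RenameSet

section Chains

variable {k : ℕ} {S : Finset ℕ} {t : Term}

theorem fout_clChain : (clChain k S t).fout = t.fout := by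
  unfold clChain
  induction S.sort (· ≤ ·) <;> simp_all [fout]

theorem fin_crChain : (crChain k S t).fin = t.fin := by
  unfold crChain
  induction S.sort (· ≤ ·) <;> simp_all [fin]

theorem mem_fin_clChain (hS : ∀ z ∈ S, ∀ w ∈ S, w ≠ z + k ∧ w ≠ z + 2 * k) (m : ℕ) :
    m ∈ (clChain k S t).fin ↔ m ∈ S ∨ m ∈ t.fin ∧ ∀ z ∈ S, m ≠ z + k ∧ m ≠ z + 2 * k := by
  unfold clChain
  simp only [← Finset.mem_sort (s := S) (r := (· ≤ ·))] at hS ⊢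
  generalize S.sort (· ≤ ·) = l at hS ⊢
  induction l generalizing m with
  | nil => simp
  | cons z l ih =>
    rw [List.foldr_cons, fin, Finset.mem_insert, Finset.mem_erase, Finset.mem_erase,
      ih m (fun u hu w hw => hS u (List.mem_cons_of_mem z hu) w (List.mem_cons_of_mem z hw))]
    grind

theorem mem_fout_crChain (hS : ∀ z ∈ S, ∀ w ∈ S, w ≠ z + k ∧ w ≠ z + 2 * k) (m : ℕ) :
    m ∈ (crChain k S t).fout ↔ m ∈ S ∨ m ∈ t.fout ∧ ∀ z ∈ S, m ≠ z + k ∧ m ≠ z + 2 * k := by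
  unfold crChain
  simp only [← Finset.mem_sort (s := S) (r := (· ≤ ·))] at hS ⊢
  generalize S.sort (· ≤ ·) = l at hS ⊢
  induction l generalizing m with
  | nil => simp
  | cons z l ih =>
    rw [List.foldr_cons, fout, Finset.mem_insert, Finset.mem_erase, Finset.mem_erase,
      ih m (fun u hu w hw => hS u (List.mem_cons_of_mem z hu) w (List.mem_cons_of_mem z hw))]
    grind

end Chains


section Join

variable {k : ℕ} {SI SO : Finset ℕ} {P Q : Term} {build : Term → Term → Term}

theorem mem_fin_join2 {E : Finset ℕ} {xb : ℕ}
    (hb : ∀ p q, (build p q).fin = E ∪ (p.fin ∪ q.fin.erase xb))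
    (hP : ∀ z ∈ SI, z + k ∉ P.allIn) (hQ : ∀ z ∈ SI, z + 2 * k ∉ Q.allIn)
    (hSI : ∀ z ∈ SI, ∀ w ∈ SI, w ≠ z + k ∧ w ≠ z + 2 * k) (m : ℕ) :
    m ∈ (join2 k SI SO P Q build).fin ↔
      m ∈ SI ∨ m ∈ E ∪ (P.fin ∪ Q.fin.erase xb) ∧ ∀ z ∈ SI, m ≠ z + k ∧ m ≠ z + 2 * k := by
  rw [join2, mem_fin_clChain hSI, fin_crChain, hb]
  simp only [Finset.mem_union, Finset.mem_erase, fin_renameSetOut,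
    mem_fin_renameSetIn hP (fun z hz w hw => (hSI w hw z hz).1),
    mem_fin_renameSetIn hQ (fun z hz w hw => (hSI w hw z hz).2)]
  grind

theorem mem_fout_join2 {a : ℕ} (hb : ∀ p q, (build p q).fout = p.fout.erase a ∪ q.fout)
    (hP : ∀ z ∈ SO, z + k ∉ P.allOut) (hQ : ∀ z ∈ SO, z + 2 * k ∉ Q.allOut)
    (hSO : ∀ z ∈ SO, ∀ w ∈ SO, w ≠ z + k ∧ w ≠ z + 2 * k) (m : ℕ) :
    m ∈ (join2 k SI SO P Q build).fout ↔
      m ∈ SO ∨ m ∈ P.fout.erase a ∪ Q.fout ∧ ∀ z ∈ SO, m ≠ z + k ∧ m ≠ z + 2 * k := by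
  rw [join2, fout_clChain, mem_fout_crChain hSO, hb]
  simp only [Finset.mem_union, Finset.mem_erase, fout_renameSetIn,
    mem_fout_renameSetOut (allOut_renameSetIn (S := SI) ▸ hP)
      (fun z hz w hw => (hSO w hw z hz).1),
    mem_fout_renameSetOut (allOut_renameSetIn (S := SI) ▸ hQ)
      (fun z hz w hw => (hSO w hw z hz).2)]
  grind

theorem fin_join2_of_lt {E : Finset ℕ} {xb : ℕ}
    (hb : ∀ p q, (build p q).fin = E ∪ (p.fin ∪ q.fin.erase xb))
    (hP : ∀ w ∈ P.allIn, w < k) (hQ : ∀ w ∈ Q.allIn, w < k) (hE : ∀ w ∈ E, w < k)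
    (hSI : SI ⊆ P.fin) :
    (join2 k SI SO P Q build).fin = E ∪ (P.fin ∪ Q.fin.erase xb) := by
  have hSIk : ∀ z ∈ SI, z < k := fun z hz => hP z (fin_subset_allIn P (hSI hz))
  have hk : ∀ m ∈ E ∪ (P.fin ∪ Q.fin.erase xb), m < k := by
    simp only [Finset.mem_union, Finset.mem_erase]
    rintro m (hm | hm | ⟨-, hm⟩)
    exacts [hE m hm, hP m (fin_subset_allIn P hm), hQ m (fin_subset_allIn Q hm)]
  ext m
  rw [mem_fin_join2 hb (fun z _ h => by grind) (fun z _ h => by grind)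
    (fun z hz w hw => by grind)]
  constructor
  · rintro (hm | ⟨hm, -⟩)
    exacts [Finset.mem_union_right _ (Finset.mem_union_left _ (hSI hm)), hm]
  · exact fun hm => Or.inr ⟨hm, fun z _ => by grind⟩

theorem fout_join2_of_lt {a : ℕ} (hb : ∀ p q, (build p q).fout = p.fout.erase a ∪ q.fout)
    (hP : ∀ w ∈ P.allOut, w < k) (hQ : ∀ w ∈ Q.allOut, w < k) (hSO : SO ⊆ P.fout.erase a) :
    (join2 k SI SO P Q build).fout = P.fout.erase a ∪ Q.fout := by
  have hSOk : ∀ z ∈ SO, z < k := fun z hz =>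
    hP z (fout_subset_allOut P (Finset.mem_of_mem_erase (hSO hz)))
  have hk : ∀ m ∈ P.fout.erase a ∪ Q.fout, m < k := by
    simp only [Finset.mem_union, Finset.mem_erase]
    rintro m (⟨-, hm⟩ | hm)
    exacts [hP m (fout_subset_allOut P hm), hQ m (fout_subset_allOut Q hm)]
  ext m
  rw [mem_fout_join2 hb (fun z _ h => by grind) (fun z _ h => by grind)
    (fun z hz w hw => by grind)]
  constructor
  · rintro (hm | ⟨hm, -⟩)
    exacts [Finset.mem_union_left _ (hSO hm), hm]
  · exact fun hm => Or.inr ⟨hm, fun z _ => by grind⟩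

end Join


theorem fin_wlIf (x : ℕ) (P : Term) : (wlIf x P).fin = insert x P.fin := by
  unfold wlIf; split_ifs with h
  exacts [(Finset.insert_eq_of_mem h).symm, rfl]

theorem fout_wlIf (x : ℕ) (P : Term) : (wlIf x P).fout = P.fout := by
  unfold wlIf; split_ifs <;> rfl

theorem fin_wrIf (a : ℕ) (P : Term) : (wrIf a P).fin = P.fin := by
  unfold wrIf; split_ifs <;> rfl

theorem fout_wrIf (a : ℕ) (P : Term) : (wrIf a P).fout = insert a P.fout := by
  unfold wrIf; split_ifs with h
  exacts [(Finset.insert_eq_of_mem h).symm, rfl]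

theorem fout_cr_exp_renameOut {R : Term} {x b a n n' : ℕ} (hn : n ∉ R.allOut)
    (hn' : n' ∉ R.allOut) :
    (cr (exp x (R.renameOut n a) b n') n n' a).fout = (exp x R b a).fout := by
  have hR : ∀ m ∈ R.fout, m ≠ n ∧ m ≠ n' := fun m hm =>
    ⟨ne_of_mem_of_not_mem (fout_subset_allOut R hm) hn,
      ne_of_mem_of_not_mem (fout_subset_allOut R hm) hn'⟩
  ext m
  simp only [fout, Finset.mem_insert, Finset.mem_erase, mem_fout_renameOut hn]
  grind

/-- The renamed `x`, that is `n`, may be shared in turn and is then duplicated like any other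
shared name; `3 * k ≤ n` keeps it clear of the copies `z + k`, `z + 2 * k` of the names `z < k`. -/
theorem fin_cl_join2_renameIn {P Q : Term} {SO : Finset ℕ} {a x y k n n' : ℕ}
    (hP : ∀ w ∈ P.allIn, w < k) (hQ : ∀ w ∈ Q.allIn, w < k)
    (hk : 0 < k) (hn : 3 * k ≤ n) (hn' : k ≤ n') :
    (cl x n n' (join2 k ((P.renameIn n x).fin ∩ (Q.renameIn n x).fin.erase y) SO
      (P.renameIn n x) (Q.renameIn n x) (fun p q => imp p a n' y q))).fin =
      insert x (P.fin ∪ Q.fin.erase y) := by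
  have hnP : n ∉ P.allIn := fun h => by grind
  have hnQ : n ∉ Q.allIn := fun h => by grind
  have hPfin := mem_fin_renameIn (o := x) hnP
  have hQfin := mem_fin_renameIn (o := x) hnQ
  set SI := (P.renameIn n x).fin ∩ (Q.renameIn n x).fin.erase y
  have hSI : ∀ z ∈ SI, z < k ∨ z = n := fun z hz => by
    have := fin_subset_allIn P
    grind
  have hJ := mem_fin_join2 (k := k) (SI := SI) (SO := SO) (xb := y) (E := {n'})
    (P := P.renameIn n x) (Q := Q.renameIn n x)
    (build := fun p q => imp p a n' y q) (fun _ _ => by rw [fin, Finset.insert_eq])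
    (fun z hz h => by have := mem_allIn_renameIn h; grind)
    (fun z hz h => by have := mem_allIn_renameIn h; grind)
    (fun z hz w hw => by grind)
  ext m
  have := fin_subset_allIn P
  have := fin_subset_allIn Q
  simp only [fin, Finset.mem_insert, Finset.mem_erase, hJ, Finset.mem_union,
    Finset.mem_singleton, hPfin, hQfin]
  grind

def joinCut (T : Term) (a x : ℕ) (U : Term) (build : Term → Term → Term) : Term :=
  join2 ((wrIf a T).maxName + (wlIf x U).maxName + a + x + 1)
    ((wrIf a T).fin ∩ (wlIf x U).fin.erase x) (((wrIf a T).fout.erase a) ∩ (wlIf x U).fout)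
    (wrIf a T) (wlIf x U) build

variable {T U : Term} {a x : ℕ} {build : Term → Term → Term}

theorem fin_joinCut (hb : ∀ p q, (build p q).fin = p.fin ∪ q.fin.erase x) :
    (joinCut T a x U build).fin = T.fin ∪ U.fin.erase x := by
  rw [joinCut, fin_join2_of_lt (E := ∅) (by simpa only [Finset.empty_union] using hb)
      (lt_of_mem_allIn (by omega)) (lt_of_mem_allIn (by omega)) (by simp)
      Finset.inter_subset_left,
    Finset.empty_union, fin_wrIf, fin_wlIf, Finset.erase_insert_eq_erase]

theorem fout_joinCut (hb : ∀ p q, (build p q).fout = p.fout.erase a ∪ q.fout) :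
    (joinCut T a x U build).fout = T.fout.erase a ∪ U.fout := by
  rw [joinCut, fout_join2_of_lt hb (lt_of_mem_allOut (by omega)) (lt_of_mem_allOut (by omega))
      Finset.inter_subset_left,
    fout_wrIf, fout_wlIf, Finset.erase_insert_eq_erase]

end Term

open Term

theorem encode_cut (P : XTerm) (a x : ℕ) (Q : XTerm) :
    encode (.cut P a x Q) = joinCut (encode P) a x (encode Q) (.cut · a x ·) := rfl

theorem encode_lcut (P : XTerm) (a x : ℕ) (Q : XTerm) :
    encode (.lcut P a x Q) = joinCut (encode P) a x (encode Q) (.lcut · a x ·) := rfl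

theorem encode_rcut (P : XTerm) (a x : ℕ) (Q : XTerm) :
    encode (.rcut P a x Q) = joinCut (encode P) a x (encode Q) (.rcut · a x ·) := rfl

theorem fin_encode_exp (x : ℕ) (P : XTerm) (b a : ℕ) :
    (encode (.exp x P b a)).fin = (encode P).fin.erase x := by
  simp only [encode]
  split_ifs <;>
    simp only [Term.fin, fin_renameOut, fin_wrIf, fin_wlIf, Finset.erase_insert_eq_erase]

theorem fout_encode_exp (x : ℕ) (P : XTerm) (b a : ℕ) :
    (encode (.exp x P b a)).fout = insert a ((encode P).fout.erase b) := by
  simp only [encode]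
  rw [apply_ite Term.fout, fout_cr_exp_renameOut
    (fun h => lt_irrefl _ (lt_of_mem_allOut (by omega) _ h))
    (fun h => lt_irrefl _ (lt_of_mem_allOut (by omega) _ h)), ite_self]
  simp only [Term.fout, fout_wrIf, fout_wlIf, Finset.erase_insert_eq_erase]

theorem fin_encode_imp (P : XTerm) (a x y : ℕ) (Q : XTerm) :
    (encode (.imp P a x y Q)).fin = insert x ((encode P).fin ∪ (encode Q).fin.erase y) := by
  simp only [encode]
  rw [apply_ite Term.fin,
    fin_cl_join2_renameIn (lt_of_mem_allIn (by omega)) (lt_of_mem_allIn (by omega))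
      (by omega) (by omega) (by omega),
    fin_join2_of_lt (E := {x}) (fun _ _ => by rw [Term.fin, Finset.insert_eq])
      (lt_of_mem_allIn (by omega)) (lt_of_mem_allIn (by omega)) (by simp; omega)
      Finset.inter_subset_left,
    ← Finset.insert_eq, ite_self, fin_wrIf, fin_wlIf, Finset.erase_insert_eq_erase]

theorem fout_encode_imp (P : XTerm) (a x y : ℕ) (Q : XTerm) :
    (encode (.imp P a x y Q)).fout = (encode P).fout.erase a ∪ (encode Q).fout := by
  simp only [encode]
  rw [apply_ite Term.fout, Term.fout,
    fout_join2_of_lt (fun _ _ => rfl)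
      (by rw [allOut_renameIn]; exact lt_of_mem_allOut (by omega))
      (by rw [allOut_renameIn]; exact lt_of_mem_allOut (by omega)) Finset.inter_subset_left,
    fout_join2_of_lt (fun _ _ => rfl) (lt_of_mem_allOut (by omega)) (lt_of_mem_allOut (by omega))
      Finset.inter_subset_left,
    fout_renameIn, fout_renameIn, ite_self, fout_wrIf, fout_wlIf,
    Finset.erase_insert_eq_erase]

/-- the encoding `⟦·⟧ : X → *x` preserves the set of free names:
`N(P) = N(⟦P⟧)` (both on innames and on outnames). -/
theorem encode_preserves_free_names (P : XTerm) :
    P.fin = (encode P).fin ∧ P.fout = (encode P).fout := by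
  induction P with
  | caps x a => exact ⟨rfl, rfl⟩
  | exp x P b a ih =>
    rw [fin_encode_exp, fout_encode_exp, ← ih.1, ← ih.2]
    exact ⟨rfl, rfl⟩
  | imp P a x y Q ihP ihQ =>
    rw [fin_encode_imp, fout_encode_imp, ← ihP.1, ← ihP.2, ← ihQ.1, ← ihQ.2]
    exact ⟨rfl, rfl⟩
  | cut P a x Q ihP ihQ =>
    rw [encode_cut, fin_joinCut (fun _ _ => rfl), fout_joinCut (fun _ _ => rfl), ← ihP.1,
      ← ihP.2, ← ihQ.1, ← ihQ.2]
    exact ⟨rfl, rfl⟩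
  | lcut P a x Q ihP ihQ =>
    rw [encode_lcut, fin_joinCut (fun _ _ => rfl), fout_joinCut (fun _ _ => rfl), ← ihP.1,
      ← ihP.2, ← ihQ.1, ← ihQ.2]
    exact ⟨rfl, rfl⟩
  | rcut P a x Q ihP ihQ =>
    rw [encode_rcut, fin_joinCut (fun _ _ => rfl), fout_joinCut (fun _ _ => rfl), ← ihP.1,
      ← ihP.2, ← ihQ.1, ← ihQ.2]
    exact ⟨rfl, rfl⟩

end StarX
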